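/- arXiv:1710.02655 — 2 statements merged into one kernel-verified Lean document; each statement's English description precedes it below -/
import Mathlib

section
/- Set c_W = e^{M}, κ = γ_∞ √(a⁺ λ(O_U)), and fix R > 0; set R' = c_W κ R. Assume that for all r, r̄ ∈ ℝ with |r|, |r̄| ≤ R' one has |m₀(a,x;r) − m₀(a,x;r̄)| ≤ L |r − r̄| for a.e. (a,x), with some L ≥ 0. Define S₂(u)(a,x) = h(a,x) · m₀(a,x; U(e^{W} u)) · u(a,x). Then S₂ maps H into H and for all u, ū ∈ H with ‖u‖_H ≤ R and ‖ū‖_H ≤ R one has ‖S₂(u) − S₂(ū)‖_H ≤ c₀ · ( c_W · L · κ · R + m_{0∞} ) · ‖u − ū‖_H. That is, S₂ is locally Lipschitz continuous on H. -/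
open MeasureTheory Set

/-! The weighted population is `U(u) = ⟪G, u⟫` for the kernel `G = 1_{O_U} γ e^W`, whose
`L²` norm is at most `γ_∞ e^M √(a⁺ λ(O_U)) = c_W κ`; hence `U` is `c_W κ`-Lipschitz on `H`
and maps the ball of radius `R` into `[-R', R']`, where `m₀` is `L`-Lipschitz. Writing
`S₂ u − S₂ ū = h (m₀(U u) − m₀(U ū)) u + h m₀(U ū) (u − ū)`, the first term is bounded
by `c₀ L c_W κ ‖u − ū‖ R` and the second by `c₀ m_{0∞} ‖u − ū‖`. -/

section

variable {α : Type*} [MeasurableSpace α] {μ : Measure α}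

theorem exists_inner_eq_setIntegral_mul {s : Set α} (hs : MeasurableSet s) (hμs : μ s ≠ ⊤)
    {g : α → ℝ} (hg : AEStronglyMeasurable g μ) {C : ℝ} (hC : 0 ≤ C)
    (hgC : ∀ᵐ x ∂μ.restrict s, ‖g x‖ ≤ C) :
    ∃ G : Lp ℝ 2 μ, ‖G‖ ≤ C * √(μ s).toReal ∧
      ∀ u : Lp ℝ 2 μ, ∫ x in s, g x * u x ∂μ = inner ℝ G u := by
  have hnorm : eLpNorm (s.indicator g) 2 μ ≤ ENNReal.ofReal (C * √(μ s).toReal) := by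
    rw [eLpNorm_indicator_eq_eLpNorm_restrict hs]
    refine (eLpNorm_le_of_ae_bound hgC).trans_eq ?_
    conv_lhs => rw [Measure.restrict_apply_univ, ← ENNReal.ofReal_toReal hμs]
    rw [ENNReal.toReal_ofNat,
      ENNReal.ofReal_rpow_of_nonneg ENNReal.toReal_nonneg (by norm_num),
      ← ENNReal.ofReal_mul (by positivity), Real.sqrt_eq_rpow, mul_comm, one_div]
  have hmem : MemLp (s.indicator g) 2 μ :=
    ⟨hg.indicator hs, hnorm.trans_lt ENNReal.ofReal_lt_top⟩
  refine ⟨hmem.toLp _, ?_, fun u => ?_⟩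
  · rw [Lp.norm_toLp]
    exact ENNReal.toReal_le_of_le_ofReal (by positivity) hnorm
  · rw [L2.inner_def, ← integral_indicator hs]
    refine integral_congr_ae ?_
    filter_upwards [hmem.coeFn_toLp] with x hx
    rw [RCLike.inner_apply, RCLike.conj_to_real, hx]
    by_cases hxs : x ∈ s <;> simp [hxs, mul_comm]

theorem abs_setIntegral_mul_exp_mul_le {s : Set α} (hs : MeasurableSet s)
    (hμs : μ s ≠ ⊤) {γ W : α → ℝ} (hγm : Measurable γ) (hWm : Measurable W) {γinf M : ℝ}
    (hγinf : 0 ≤ γinf) (hγb : ∀ᵐ x ∂μ.restrict s, 0 ≤ γ x ∧ γ x ≤ γinf)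
    (hWb : ∀ᵐ x ∂μ, |W x| ≤ M) :
    let I : Lp ℝ 2 μ → ℝ := fun u => ∫ x in s, γ x * (Real.exp (W x) * u x) ∂μ
    (∀ u, |I u| ≤ Real.exp M * (γinf * √(μ s).toReal) * ‖u‖) ∧
      ∀ u v, |I u - I v| ≤ Real.exp M * (γinf * √(μ s).toReal) * ‖u - v‖ := by
  have hkernel : ∀ᵐ x ∂μ.restrict s, ‖γ x * Real.exp (W x)‖ ≤ γinf * Real.exp M := by
    filter_upwards [hγb, ae_restrict_of_ae hWb] with x ⟨hγ0, hγ⟩ hW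
    rw [norm_mul, Real.norm_of_nonneg hγ0, Real.norm_of_nonneg (Real.exp_pos _).le]
    exact mul_le_mul hγ (Real.exp_le_exp.2 ((le_abs_self _).trans hW)) (Real.exp_pos _).le
      hγinf
  obtain ⟨G, hG, hIG⟩ := exists_inner_eq_setIntegral_mul (g := fun x => γ x * Real.exp (W x))
    hs hμs (hγm.mul (Real.measurable_exp.comp hWm)).aestronglyMeasurable (by positivity) hkernel
  have hI : ∀ u : Lp ℝ 2 μ, ∫ x in s, γ x * (Real.exp (W x) * u x) ∂μ = inner ℝ G u :=
    fun u => by simp only [← hIG, mul_assoc]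
  have hbd : ∀ u : Lp ℝ 2 μ, |inner ℝ G u| ≤ Real.exp M * (γinf * √(μ s).toReal) * ‖u‖ :=
    fun u => (abs_real_inner_le_norm G u).trans
      (mul_le_mul_of_nonneg_right (hG.trans_eq (by ring)) (norm_nonneg u))
  refine ⟨fun u => ?_, fun u v => ?_⟩
  · simpa only [hI] using hbd u
  · simpa only [hI, ← inner_sub_right] using hbd (u - v)

theorem eLpNorm_mul_sub_mul_le {p : ENNReal} [Fact (1 ≤ p)] {a b : α → ℝ}
    (ha : AEStronglyMeasurable a μ) (hb : AEStronglyMeasurable b μ) {A B : ℝ}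
    (hab : ∀ᵐ x ∂μ, ‖a x - b x‖ ≤ A) (hbB : ∀ᵐ x ∂μ, ‖b x‖ ≤ B) (u v : Lp ℝ p μ) :
    eLpNorm (fun x => a x * u x - b x * v x) p μ ≤ ENNReal.ofReal (A * ‖u‖ + B * ‖u - v‖) := by
  rcases eq_zero_or_neZero μ with rfl | hμ
  · simp
  have : (ae μ).NeBot := ae_neBot.2 hμ.out
  have hA : 0 ≤ A := (norm_nonneg _).trans hab.exists.choose_spec
  have hB : 0 ≤ B := (norm_nonneg _).trans hbB.exists.choose_spec
  have hsplit : (fun x => a x * u x - b x * v x) =ᵐ[μ]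
      (fun x => (a x - b x) * u x) + fun x => b x * (u - v : Lp ℝ p μ) x := by
    filter_upwards [Lp.coeFn_sub u v] with x hx
    simp only [Pi.add_apply, hx, Pi.sub_apply]
    ring
  rw [eLpNorm_congr_ae hsplit]
  calc _ ≤ eLpNorm (fun x => (a x - b x) * u x) p μ
          + eLpNorm (fun x => b x * (u - v : Lp ℝ p μ) x) p μ :=
        eLpNorm_add_le ((ha.sub hb).mul (Lp.aestronglyMeasurable u))
          (hb.mul (Lp.aestronglyMeasurable _)) Fact.out
    _ ≤ ENNReal.ofReal A * eLpNorm u p μ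
          + ENNReal.ofReal B * eLpNorm (u - v : Lp ℝ p μ) p μ := by
        gcongr
        · refine eLpNorm_le_mul_eLpNorm_of_ae_le_mul ?_ p
          filter_upwards [hab] with x hx
          rw [norm_mul]
          gcongr
        · refine eLpNorm_le_mul_eLpNorm_of_ae_le_mul ?_ p
          filter_upwards [hbB] with x hx
          rw [norm_mul]
          gcongr
    _ = ENNReal.ofReal (A * ‖u‖ + B * ‖u - v‖) := by
        rw [ENNReal.ofReal_add (by positivity) (by positivity), ENNReal.ofReal_mul hA,
          ENNReal.ofReal_mul hB, ofReal_norm, ofReal_norm, Lp.enorm_def, Lp.enorm_def]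

theorem eLpNorm_coeff_mul_sub_coeff_mul_le {p : ENNReal} [Fact (1 ≤ p)] {k : α → ℝ → ℝ}
    (hk : ∀ r, AEStronglyMeasurable (fun x => k x r) μ) {B Λ ρ : ℝ}
    (hkB : ∀ r, ∀ᵐ x ∂μ, ‖k x r‖ ≤ B) (hΛ : 0 ≤ Λ)
    (hkΛ : ∀ r r', |r| ≤ ρ → |r'| ≤ ρ → ∀ᵐ x ∂μ, ‖k x r - k x r'‖ ≤ Λ * |r - r'|)
    {Φ : Lp ℝ p μ → ℝ} {K R : ℝ} (hΦ : ∀ u v, |Φ u - Φ v| ≤ K * ‖u - v‖)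
    (hΦρ : ∀ u, ‖u‖ ≤ R → |Φ u| ≤ ρ) {u v : Lp ℝ p μ} (hu : ‖u‖ ≤ R) (hv : ‖v‖ ≤ R) :
    eLpNorm (fun x => k x (Φ u) * u x - k x (Φ v) * v x) p μ
      ≤ ENNReal.ofReal ((Λ * K * R + B) * ‖u - v‖) := by
  refine (eLpNorm_mul_sub_mul_le (hk _) (hk _) (hkΛ _ _ (hΦρ u hu) (hΦρ v hv)) (hkB _) u v
    ).trans (ENNReal.ofReal_le_ofReal ?_)
  have hΦuv := hΦ u v
  calc Λ * |Φ u - Φ v| * ‖u‖ + B * ‖u - v‖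
      ≤ Λ * (K * ‖u - v‖) * R + B * ‖u - v‖ := by
        gcongr
        exact mul_nonneg hΛ ((abs_nonneg _).trans hΦuv)
    _ = (Λ * K * R + B) * ‖u - v‖ := by ring

end

theorem stmt2_general
    (d : ℕ)
    (O : Set (Fin d → ℝ)) (hObd : Bornology.IsBounded O)
    (aplus : ℝ) (ha : 0 < aplus)
    (μ : Measure (ℝ × (Fin d → ℝ)))
    (hμ : μ = (volume.restrict (Set.Ioo 0 aplus)).prod (volume.restrict O))
    (OU : Set (Fin d → ℝ)) (hOUO : OU ⊆ O) (hOUm : MeasurableSet OU)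
    (γ : ℝ × (Fin d → ℝ) → ℝ) (hγm : Measurable γ)
    (γinf : ℝ) (hγinf : 0 ≤ γinf)
    (hγb : ∀ᵐ p ∂(μ.restrict (Set.univ ×ˢ OU)), 0 ≤ γ p ∧ γ p ≤ γinf)
    (W : ℝ × (Fin d → ℝ) → ℝ) (hWm : Measurable W)
    (M : ℝ) (hWb : ∀ᵐ p ∂μ, |W p| ≤ M)
    (m₀ : ℝ × (Fin d → ℝ) → ℝ → ℝ) (hm₀m : Measurable (Function.uncurry m₀))
    (m0inf : ℝ) (hm₀b : ∀ r : ℝ, ∀ᵐ p ∂μ, 0 ≤ m₀ p r ∧ m₀ p r ≤ m0inf)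
    (h : ℝ × (Fin d → ℝ) → ℝ) (hhm : Measurable h)
    (c₀ : ℝ) (hc₀ : 0 ≤ c₀) (hhb : ∀ᵐ p ∂μ, 0 ≤ h p ∧ h p ≤ c₀)
    (Uexp : Lp ℝ 2 μ → ℝ)
    (hUexp : ∀ u : Lp ℝ 2 μ,
      Uexp u = ∫ p in Set.univ ×ˢ OU, γ p * (Real.exp (W p) * u p) ∂μ)
    (cW κ R R' L : ℝ)
    (hcW : cW = Real.exp M)
    (hκ : κ = γinf * Real.sqrt (aplus * (volume OU).toReal))
    (hR' : R' = cW * κ * R)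
    (hL : 0 ≤ L)
    (hLip : ∀ r r' : ℝ, |r| ≤ R' → |r'| ≤ R' →
      ∀ᵐ p ∂μ, |m₀ p r - m₀ p r'| ≤ L * |r - r'|)
    (S₂ : Lp ℝ 2 μ → (ℝ × (Fin d → ℝ)) → ℝ)
    (hS₂ : ∀ (u : Lp ℝ 2 μ) (p : ℝ × (Fin d → ℝ)),
      S₂ u p = h p * m₀ p (Uexp u) * u p) :
    (∀ u : Lp ℝ 2 μ, MemLp (S₂ u) 2 μ) ∧
    (∀ u v : Lp ℝ 2 μ, ‖u‖ ≤ R → ‖v‖ ≤ R →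
      eLpNorm (S₂ u - S₂ v) 2 μ ≤
        ENNReal.ofReal (c₀ * (cW * L * κ * R + m0inf) * ‖u - v‖)) := by
  have hs : MeasurableSet (univ ×ˢ OU : Set (ℝ × (Fin d → ℝ))) :=
    MeasurableSet.univ.prod hOUm
  have hμs : μ (univ ×ˢ OU) = ENNReal.ofReal aplus * volume OU := by
    rw [hμ, Measure.prod_prod, Measure.restrict_apply_univ, Measure.restrict_apply hOUm,
      inter_eq_self_of_subset_left hOUO, Real.volume_Ioo, sub_zero]
  have hOU : volume OU ≠ ⊤ := (measure_mono hOUO |>.trans_lt hObd.measure_lt_top).ne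
  obtain ⟨hUbd, hUlip⟩ := abs_setIntegral_mul_exp_mul_le hs
    (by rw [hμs]; exact ENNReal.mul_ne_top ENNReal.ofReal_ne_top hOU) hγm hWm hγinf hγb hWb
  simp only [← hUexp, hμs, ENNReal.toReal_mul, ENNReal.toReal_ofReal ha.le, ← hcW, ← hκ]
    at hUbd hUlip
  have hcWκ : 0 ≤ cW * κ := by rw [hcW, hκ]; positivity
  have hk : ∀ r, AEStronglyMeasurable (fun p => h p * m₀ p r) μ := fun r =>
    (hhm.mul hm₀m.of_uncurry_right).aestronglyMeasurable
  have hkB : ∀ r, ∀ᵐ p ∂μ, ‖h p * m₀ p r‖ ≤ c₀ * m0inf := fun r => by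
    filter_upwards [hhb, hm₀b r] with p ⟨hh0, hh⟩ ⟨hm0, hm⟩
    rw [norm_mul, Real.norm_of_nonneg hh0, Real.norm_of_nonneg hm0]
    exact mul_le_mul hh hm hm0 hc₀
  have hkΛ : ∀ r r', |r| ≤ R' → |r'| ≤ R' →
      ∀ᵐ p ∂μ, ‖h p * m₀ p r - h p * m₀ p r'‖ ≤ c₀ * L * |r - r'| := fun r r' hr hr' => by
    filter_upwards [hhb, hLip r r' hr hr'] with p ⟨hh0, hh⟩ hm
    rw [← mul_sub, norm_mul, Real.norm_of_nonneg hh0, Real.norm_eq_abs, mul_assoc]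
    exact mul_le_mul hh hm (abs_nonneg _) hc₀
  have hS₂eq : ∀ u, S₂ u = fun p => h p * m₀ p (Uexp u) * u p := fun u => funext (hS₂ u)
  refine ⟨fun u => ?_, fun u v hu hv => ?_⟩
  · rw [hS₂eq]
    refine (Lp.memLp u).of_le_mul (c := c₀ * m0inf)
      ((hk _).mul (Lp.aestronglyMeasurable u)) ?_
    filter_upwards [hkB (Uexp u)] with p hp
    rw [norm_mul]
    gcongr
  rw [hS₂eq, hS₂eq]
  refine (eLpNorm_coeff_mul_sub_coeff_mul_le hk hkB (mul_nonneg hc₀ hL) hkΛ hUlip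
    (fun w hw => ?_) hu hv).trans_eq (by ring_nf)
  rw [hR']
  exact (hUbd w).trans (by gcongr)

/-- With `c_W = e^M`, `κ = γ_∞ √(a⁺ λ(O_U))`, `R > 0`, `R' = c_W κ R`, if
`m₀(a,x;·)` is `L`-Lipschitz on `[-R',R']` a.e., then
`S₂(u)(a,x) = h(a,x) m₀(a,x;U(e^W u)) u(a,x)` maps `H` into `H` and is locally Lipschitz:
`‖S₂(u) − S₂(ū)‖_H ≤ c₀ (c_W L κ R + m_{0∞}) ‖u − ū‖_H` whenever `‖u‖, ‖ū‖ ≤ R`. -/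
theorem stmt2
    (d : ℕ) (hd : 1 ≤ d)
    (O : Set (Fin d → ℝ)) (hO : IsOpen O) (hObd : Bornology.IsBounded O)
    (aplus : ℝ) (ha : 0 < aplus)
    (μ : Measure (ℝ × (Fin d → ℝ)))
    (hμ : μ = (volume.restrict (Set.Ioo 0 aplus)).prod (volume.restrict O))
    (OU : Set (Fin d → ℝ)) (hOUO : OU ⊆ O) (hOUm : MeasurableSet OU)
    (γ : ℝ × (Fin d → ℝ) → ℝ) (hγm : Measurable γ)
    (γinf : ℝ) (hγinf : 0 ≤ γinf)
    (hγb : ∀ᵐ p ∂(μ.restrict (Set.univ ×ˢ OU)), 0 ≤ γ p ∧ γ p ≤ γinf)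
    (W : ℝ × (Fin d → ℝ) → ℝ) (hWm : Measurable W)
    (M : ℝ) (hM : 0 ≤ M) (hWb : ∀ᵐ p ∂μ, |W p| ≤ M)
    (m₀ : ℝ × (Fin d → ℝ) → ℝ → ℝ) (hm₀m : Measurable (Function.uncurry m₀))
    (m0inf : ℝ) (hm₀b : ∀ r : ℝ, ∀ᵐ p ∂μ, 0 ≤ m₀ p r ∧ m₀ p r ≤ m0inf)
    (h : ℝ × (Fin d → ℝ) → ℝ) (hhm : Measurable h)
    (c₀ : ℝ) (hc₀ : 0 ≤ c₀) (hhb : ∀ᵐ p ∂μ, 0 ≤ h p ∧ h p ≤ c₀)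
    (Uexp : Lp ℝ 2 μ → ℝ)
    (hUexp : ∀ u : Lp ℝ 2 μ,
      Uexp u = ∫ p in Set.univ ×ˢ OU, γ p * (Real.exp (W p) * u p) ∂μ)
    (cW κ R R' L : ℝ)
    (hcW : cW = Real.exp M)
    (hκ : κ = γinf * Real.sqrt (aplus * (volume OU).toReal))
    (hR : 0 < R) (hR' : R' = cW * κ * R)
    (hL : 0 ≤ L)
    (hLip : ∀ r r' : ℝ, |r| ≤ R' → |r'| ≤ R' →
      ∀ᵐ p ∂μ, |m₀ p r - m₀ p r'| ≤ L * |r - r'|)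
    (S₂ : Lp ℝ 2 μ → (ℝ × (Fin d → ℝ)) → ℝ)
    (hS₂ : ∀ (u : Lp ℝ 2 μ) (p : ℝ × (Fin d → ℝ)),
      S₂ u p = h p * m₀ p (Uexp u) * u p) :
    (∀ u : Lp ℝ 2 μ, MemLp (S₂ u) 2 μ) ∧
    (∀ u v : Lp ℝ 2 μ, ‖u‖ ≤ R → ‖v‖ ≤ R →
      eLpNorm (S₂ u - S₂ v) 2 μ ≤
        ENNReal.ofReal (c₀ * (cW * L * κ * R + m0inf) * ‖u - v‖)) :=
  stmt2_general d O hObd aplus ha μ hμ OU hOUO hOUm γ hγm γinf hγinf hγb W hWm M hWb m₀ hm₀m m0inf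
    hm₀b h hhm c₀ hc₀ hhb Uexp hUexp cW κ R R' L hcW hκ hR' hL hLip S₂ hS₂
end

section
/- Set c_W = e^{M}, κ = γ_∞ √(a⁺ λ(O_U)), and fix R > 0; set R' = c_W κ R. Assume that for all r, r̄ ∈ ℝ with |r|, |r̄| ≤ R' one has |μ_S(a,x;r) − μ_S(a,x;r̄)| ≤ L |r − r̄| for a.e. (a,x), with some L ≥ 0. Define S₁(u)(a,x) = μ_S(a,x; U(e^{W} u)) · u(a,x). Then S₁ maps H into H and for all u, ū ∈ H with ‖u‖_H ≤ R and ‖ū‖_H ≤ R one has ‖S₁(u) − S₁(ū)‖_H ≤ ( c_W · L · κ · R + μ_∞ ) · ‖u − ū‖_H. That is, S₁ is locally Lipschitz continuous on H. -/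
/-!
On the finite-measure set `(0,a⁺) × O_U` the weight `γ e^W` is bounded by `γ_∞ c_W`, so by
Cauchy–Schwarz `u ↦ U(e^W u)` is a bounded linear functional of norm at most `c_W κ`; in
particular it maps the `R`-ball of `H` into `[-R', R']`, where `μ_S` is `L`-Lipschitz. Then
`S₁ u - S₁ ū = (μ_S(U(e^W u)) - μ_S(U(e^W ū))) u + μ_S(U(e^W ū)) (u - ū)`, and the two terms
are bounded by `L c_W κ ‖u - ū‖ R` and `μ_∞ ‖u - ū‖`.
-/

open MeasureTheory Set
open scoped ENNReal

namespace MeasureTheory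

variable {α : Type*} [MeasurableSpace α] {μ : Measure α}

theorem eLpNorm_mul_sub_mul_le {p : ℝ≥0∞} (hp : 1 ≤ p) {a b f g : α → ℝ}
    (ha : AEStronglyMeasurable a μ) (hb : AEStronglyMeasurable b μ)
    (hf : AEStronglyMeasurable f μ) (hg : AEStronglyMeasurable g μ) {A B : ℝ}
    (hA : ∀ᵐ x ∂μ, |a x - b x| ≤ A) (hB : ∀ᵐ x ∂μ, |b x| ≤ B) :
    eLpNorm (fun x => a x * f x - b x * g x) p μ ≤
      ENNReal.ofReal A * eLpNorm f p μ + ENNReal.ofReal B * eLpNorm (f - g) p μ := by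
  have hsplit : (fun x => a x * f x - b x * g x) = (a - b) * f + b * (f - g) := by
    funext x
    simp only [Pi.add_apply, Pi.mul_apply, Pi.sub_apply]
    ring
  rw [hsplit]
  refine (eLpNorm_add_le ((ha.sub hb).mul hf) (hb.mul (hf.sub hg)) hp).trans
    (add_le_add (eLpNorm_le_mul_eLpNorm_of_ae_le_mul ?_ p)
      (eLpNorm_le_mul_eLpNorm_of_ae_le_mul ?_ p))
  · filter_upwards [hA] with x hx
    rw [Pi.mul_apply, norm_mul, Real.norm_eq_abs ((a - b) x)]
    exact mul_le_mul_of_nonneg_right hx (norm_nonneg _)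
  · filter_upwards [hB] with x hx
    rw [Pi.mul_apply, norm_mul, Real.norm_eq_abs (b x)]
    exact mul_le_mul_of_nonneg_right hx (norm_nonneg _)

namespace Lp

variable {S : Set α}

theorem integrableOn_of_measure_ne_top (f : Lp ℝ 2 μ) (hS : μ S ≠ ∞) : IntegrableOn f S μ :=
  have := isFiniteMeasure_restrict.mpr hS
  ((Lp.memLp f).restrict S).integrable one_le_two

theorem setIntegral_abs_le_sqrt_measure_mul_norm (f : Lp ℝ 2 μ) (hS : μ S ≠ ∞) :
    ∫ x in S, |f x| ∂μ ≤ √(μ S).toReal * ‖f‖ := by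
  have hf := (Lp.aestronglyMeasurable f).restrict (s := S)
  have hL1 : eLpNorm f 1 (μ.restrict S) ≤ eLpNorm f 2 μ * μ S ^ (1 / 2 : ℝ) := by
    have h := eLpNorm_le_eLpNorm_mul_rpow_measure_univ (μ := μ.restrict S) one_le_two hf
    rw [Measure.restrict_apply_univ] at h
    norm_num at h
    exact h.trans (mul_le_mul_left (eLpNorm_mono_measure _ Measure.restrict_le_self) _)
  calc ∫ x in S, |f x| ∂μ = (eLpNorm f 1 (μ.restrict S)).toReal := by
        rw [eLpNorm_one_eq_lintegral_enorm, ← integral_norm_eq_lintegral_enorm hf]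
        rfl
    _ ≤ (eLpNorm f 2 μ * μ S ^ (1 / 2 : ℝ)).toReal :=
        ENNReal.toReal_mono (ENNReal.mul_ne_top (Lp.eLpNorm_ne_top f)
          (ENNReal.rpow_ne_top_of_nonneg (by norm_num) hS)) hL1
    _ = √(μ S).toReal * ‖f‖ := by
        rw [ENNReal.toReal_mul, ← ENNReal.toReal_rpow, ← Real.sqrt_eq_rpow, Lp.norm_def,
          mul_comm]

variable {g : α → ℝ} {C : ℝ}

theorem abs_setIntegral_mul_le (f : Lp ℝ 2 μ) (hS : μ S ≠ ∞) (hC : 0 ≤ C)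
    (hgC : ∀ᵐ x ∂μ.restrict S, |g x| ≤ C) :
    |∫ x in S, g x * f x ∂μ| ≤ C * √(μ S).toReal * ‖f‖ :=
  calc |∫ x in S, g x * f x ∂μ| ≤ ∫ x in S, C * |f x| ∂μ := by
        rw [← Real.norm_eq_abs]
        refine norm_integral_le_of_norm_le
          ((integrableOn_of_measure_ne_top f hS).abs.const_mul C) ?_
        filter_upwards [hgC] with x hx
        rw [norm_mul, Real.norm_eq_abs, Real.norm_eq_abs]
        exact mul_le_mul_of_nonneg_right hx (abs_nonneg _)
    _ = C * ∫ x in S, |f x| ∂μ := integral_const_mul _ _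
    _ ≤ C * (√(μ S).toReal * ‖f‖) := by
        gcongr
        exact setIntegral_abs_le_sqrt_measure_mul_norm f hS
    _ = C * √(μ S).toReal * ‖f‖ := by ring

theorem setIntegral_mul_sub (u v : Lp ℝ 2 μ) (hS : μ S ≠ ∞)
    (hg : AEStronglyMeasurable g (μ.restrict S)) (hgC : ∀ᵐ x ∂μ.restrict S, |g x| ≤ C) :
    ∫ x in S, g x * (u - v : Lp ℝ 2 μ) x ∂μ =
      ∫ x in S, g x * u x ∂μ - ∫ x in S, g x * v x ∂μ := by
  have hint (w : Lp ℝ 2 μ) : IntegrableOn (fun x => g x * w x) S μ :=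
    (integrableOn_of_measure_ne_top w hS).bdd_mul hg hgC
  rw [← integral_sub (hint u) (hint v)]
  refine integral_congr_ae ?_
  filter_upwards [ae_restrict_of_ae (Lp.coeFn_sub u v)] with x hx
  rw [hx, Pi.sub_apply, mul_sub]

theorem abs_setIntegral_mul_sub_le (u v : Lp ℝ 2 μ) (hS : μ S ≠ ∞)
    (hg : AEStronglyMeasurable g (μ.restrict S)) (hC : 0 ≤ C)
    (hgC : ∀ᵐ x ∂μ.restrict S, |g x| ≤ C) :
    |∫ x in S, g x * u x ∂μ - ∫ x in S, g x * v x ∂μ| ≤ C * √(μ S).toReal * ‖u - v‖ := by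
  rw [← setIntegral_mul_sub u v hS hg hgC]
  exact abs_setIntegral_mul_le (u - v) hS hC hgC

theorem eLpNorm_mul_sub_mul_le_of_lipschitz {m : α → ℝ → ℝ}
    (hm : ∀ r, AEStronglyMeasurable (m · r) μ) {B : ℝ}
    (hmB : ∀ r, ∀ᵐ x ∂μ, 0 ≤ m x r ∧ m x r ≤ B) {Φ : Lp ℝ 2 μ → ℝ} {K R R' L : ℝ}
    (hΦ_bound : ∀ u, ‖u‖ ≤ R → |Φ u| ≤ R') (hΦ_lip : ∀ u v, |Φ u - Φ v| ≤ K * ‖u - v‖)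
    (hL : 0 ≤ L) (hm_lip : ∀ r s, |r| ≤ R' → |s| ≤ R' → ∀ᵐ x ∂μ, |m x r - m x s| ≤ L * |r - s|)
    {u v : Lp ℝ 2 μ} (hu : ‖u‖ ≤ R) (hv : ‖v‖ ≤ R) :
    eLpNorm (fun x => m x (Φ u) * u x - m x (Φ v) * v x) 2 μ ≤
      ENNReal.ofReal ((L * K * R + B) * ‖u - v‖) := by
  rcases eq_or_ne μ 0 with rfl | hμ
  · simp
  have hB : 0 ≤ B := by
    have := ae_neBot.mpr hμ
    obtain ⟨x, hx⟩ := (hmB 0).exists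
    exact hx.1.trans hx.2
  have hA : 0 ≤ L * (K * ‖u - v‖) := mul_nonneg hL ((abs_nonneg _).trans (hΦ_lip u v))
  have hm_sub : ∀ᵐ x ∂μ, |m x (Φ u) - m x (Φ v)| ≤ L * (K * ‖u - v‖) := by
    filter_upwards [hm_lip _ _ (hΦ_bound u hu) (hΦ_bound v hv)] with x hx
    exact hx.trans (mul_le_mul_of_nonneg_left (hΦ_lip u v) hL)
  have hm_abs : ∀ᵐ x ∂μ, |m x (Φ v)| ≤ B :=
    (hmB _).mono fun x hx => (abs_of_nonneg hx.1).trans_le hx.2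
  calc eLpNorm (fun x => m x (Φ u) * u x - m x (Φ v) * v x) 2 μ
      ≤ .ofReal (L * (K * ‖u - v‖)) * eLpNorm u 2 μ + .ofReal B * eLpNorm (⇑u - ⇑v) 2 μ :=
        eLpNorm_mul_sub_mul_le one_le_two (hm _) (hm _) (Lp.aestronglyMeasurable u)
          (Lp.aestronglyMeasurable v) hm_sub hm_abs
    _ ≤ .ofReal (L * (K * ‖u - v‖)) * .ofReal R + .ofReal B * .ofReal ‖u - v‖ := by
        rw [eLpNorm_congr_ae (Lp.coeFn_sub u v).symm, ← Lp.enorm_def, ← Lp.enorm_def,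
          ← ofReal_norm, ← ofReal_norm]
        gcongr
    _ = .ofReal ((L * K * R + B) * ‖u - v‖) := by
        rw [← ENNReal.ofReal_mul hA, ← ENNReal.ofReal_mul hB,
          ← ENNReal.ofReal_add (mul_nonneg hA ((norm_nonneg u).trans hu)) (by positivity)]
        ring_nf

end Lp

end MeasureTheory

theorem stmt3_general
    (d : ℕ)
    (O : Set (Fin d → ℝ)) (hObd : Bornology.IsBounded O)
    (aplus : ℝ) (ha : 0 < aplus)
    (μ : Measure (ℝ × (Fin d → ℝ)))
    (hμ : μ = (volume.restrict (Set.Ioo 0 aplus)).prod (volume.restrict O))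
    (OU : Set (Fin d → ℝ)) (hOUO : OU ⊆ O) (hOUm : MeasurableSet OU)
    (γ : ℝ × (Fin d → ℝ) → ℝ) (hγm : Measurable γ)
    (γinf : ℝ) (hγinf : 0 ≤ γinf)
    (hγb : ∀ᵐ p ∂(μ.restrict (Set.univ ×ˢ OU)), 0 ≤ γ p ∧ γ p ≤ γinf)
    (W : ℝ × (Fin d → ℝ) → ℝ) (hWm : Measurable W)
    (M : ℝ) (hWb : ∀ᵐ p ∂μ, |W p| ≤ M)
    (μS : ℝ × (Fin d → ℝ) → ℝ → ℝ) (hμSm : Measurable (Function.uncurry μS))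
    (μinf : ℝ) (hμSb : ∀ r : ℝ, ∀ᵐ p ∂μ, 0 ≤ μS p r ∧ μS p r ≤ μinf)
    (Uexp : Lp ℝ 2 μ → ℝ)
    (hUexp : ∀ u : Lp ℝ 2 μ,
      Uexp u = ∫ p in Set.univ ×ˢ OU, γ p * (Real.exp (W p) * u p) ∂μ)
    (cW κ R R' L : ℝ)
    (hcW : cW = Real.exp M)
    (hκ : κ = γinf * Real.sqrt (aplus * (volume OU).toReal))
    (hR' : R' = cW * κ * R)
    (hL : 0 ≤ L)
    (hLip : ∀ r r' : ℝ, |r| ≤ R' → |r'| ≤ R' →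
      ∀ᵐ p ∂μ, |μS p r - μS p r'| ≤ L * |r - r'|)
    (S₁ : Lp ℝ 2 μ → (ℝ × (Fin d → ℝ)) → ℝ)
    (hS₁ : ∀ (u : Lp ℝ 2 μ) (p : ℝ × (Fin d → ℝ)),
      S₁ u p = μS p (Uexp u) * u p) :
    (∀ u : Lp ℝ 2 μ, MemLp (S₁ u) 2 μ) ∧
    (∀ u v : Lp ℝ 2 μ, ‖u‖ ≤ R → ‖v‖ ≤ R →
      eLpNorm (S₁ u - S₁ v) 2 μ ≤
        ENNReal.ofReal ((cW * L * κ * R + μinf) * ‖u - v‖)) := by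
  obtain rfl : S₁ = fun u p => μS p (Uexp u) * u p := funext₂ hS₁
  set S := univ ×ˢ OU
  have hμS : μ S = ENNReal.ofReal aplus * volume OU := by
    rw [hμ, Measure.prod_prod, Measure.restrict_apply_univ, Measure.restrict_apply hOUm,
      inter_eq_left.mpr hOUO, Real.volume_Ioo, sub_zero]
  have hμS_ne_top : μ S ≠ ∞ := hμS ▸ ENNReal.mul_ne_top ENNReal.ofReal_ne_top
    ((measure_mono hOUO).trans_lt hObd.measure_lt_top).ne
  have hweight_le : ∀ᵐ p ∂μ.restrict S, |γ p * Real.exp (W p)| ≤ γinf * cW := by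
    filter_upwards [hγb, ae_restrict_of_ae hWb] with p hγp hWp
    rw [abs_mul, abs_of_nonneg hγp.1, Real.abs_exp, hcW]
    exact mul_le_mul hγp.2 (Real.exp_le_exp.mpr (le_of_abs_le hWp)) (Real.exp_pos _).le hγinf
  have hweight_nonneg : 0 ≤ γinf * cW := hcW ▸ by positivity
  have hconst : γinf * cW * √(μ S).toReal = cW * κ := by
    rw [hκ, hμS, ENNReal.toReal_mul, ENNReal.toReal_ofReal ha.le]
    ring
  have hUexp' (u : Lp ℝ 2 μ) : Uexp u = ∫ p in S, γ p * Real.exp (W p) * u p ∂μ := by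
    simp_rw [hUexp, mul_assoc]
  have hU_lip (u v : Lp ℝ 2 μ) : |Uexp u - Uexp v| ≤ cW * κ * ‖u - v‖ := by
    rw [hUexp', hUexp', ← hconst]
    exact Lp.abs_setIntegral_mul_sub_le u v hμS_ne_top
      (hγm.mul (Real.measurable_exp.comp hWm)).aestronglyMeasurable hweight_nonneg hweight_le
  have hU_bound (u : Lp ℝ 2 μ) (hu : ‖u‖ ≤ R) : |Uexp u| ≤ R' := by
    rw [hUexp', hR', ← hconst]
    exact (Lp.abs_setIntegral_mul_le u hμS_ne_top hweight_nonneg hweight_le).trans (by gcongr)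
  have hμSr (r : ℝ) : AEStronglyMeasurable (μS · r) μ :=
    (hμSm.comp (measurable_id.prodMk measurable_const)).aestronglyMeasurable
  have hμS_le (r : ℝ) : ∀ᵐ p ∂μ, ‖μS p r‖ ≤ μinf :=
    (hμSb r).mono fun p hp => (Real.norm_of_nonneg hp.1).trans_le hp.2
  refine ⟨fun u => (Lp.memLp u).mul' (memLp_top_of_bound (hμSr _) μinf (hμS_le _)),
    fun u v hu hv => ?_⟩
  rw [show cW * L * κ * R = L * (cW * κ) * R by ring]
  exact Lp.eLpNorm_mul_sub_mul_le_of_lipschitz hμSr hμSb hU_bound hU_lip hL hLip hu hv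

/-- With `c_W = e^M`, `κ = γ_∞ √(a⁺ λ(O_U))`, `R > 0`, `R' = c_W κ R`, if
`μ_S(a,x;·)` is `L`-Lipschitz on `[-R',R']` a.e., then
`S₁(u)(a,x) = μ_S(a,x;U(e^W u)) u(a,x)` maps `H` into `H` and is locally Lipschitz:
`‖S₁(u) − S₁(ū)‖_H ≤ (c_W L κ R + μ_∞) ‖u − ū‖_H` whenever `‖u‖, ‖ū‖ ≤ R`. -/
theorem stmt3
    (d : ℕ) (hd : 1 ≤ d)
    (O : Set (Fin d → ℝ)) (hO : IsOpen O) (hObd : Bornology.IsBounded O)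
    (aplus : ℝ) (ha : 0 < aplus)
    (μ : Measure (ℝ × (Fin d → ℝ)))
    (hμ : μ = (volume.restrict (Set.Ioo 0 aplus)).prod (volume.restrict O))
    (OU : Set (Fin d → ℝ)) (hOUO : OU ⊆ O) (hOUm : MeasurableSet OU)
    (γ : ℝ × (Fin d → ℝ) → ℝ) (hγm : Measurable γ)
    (γinf : ℝ) (hγinf : 0 ≤ γinf)
    (hγb : ∀ᵐ p ∂(μ.restrict (Set.univ ×ˢ OU)), 0 ≤ γ p ∧ γ p ≤ γinf)
    (W : ℝ × (Fin d → ℝ) → ℝ) (hWm : Measurable W)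
    (M : ℝ) (hM : 0 ≤ M) (hWb : ∀ᵐ p ∂μ, |W p| ≤ M)
    (μS : ℝ × (Fin d → ℝ) → ℝ → ℝ) (hμSm : Measurable (Function.uncurry μS))
    (μinf : ℝ) (hμSb : ∀ r : ℝ, ∀ᵐ p ∂μ, 0 ≤ μS p r ∧ μS p r ≤ μinf)
    (Uexp : Lp ℝ 2 μ → ℝ)
    (hUexp : ∀ u : Lp ℝ 2 μ,
      Uexp u = ∫ p in Set.univ ×ˢ OU, γ p * (Real.exp (W p) * u p) ∂μ)
    (cW κ R R' L : ℝ)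
    (hcW : cW = Real.exp M)
    (hκ : κ = γinf * Real.sqrt (aplus * (volume OU).toReal))
    (hR : 0 < R) (hR' : R' = cW * κ * R)
    (hL : 0 ≤ L)
    (hLip : ∀ r r' : ℝ, |r| ≤ R' → |r'| ≤ R' →
      ∀ᵐ p ∂μ, |μS p r - μS p r'| ≤ L * |r - r'|)
    (S₁ : Lp ℝ 2 μ → (ℝ × (Fin d → ℝ)) → ℝ)
    (hS₁ : ∀ (u : Lp ℝ 2 μ) (p : ℝ × (Fin d → ℝ)),
      S₁ u p = μS p (Uexp u) * u p) :
    (∀ u : Lp ℝ 2 μ, MemLp (S₁ u) 2 μ) ∧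
    (∀ u v : Lp ℝ 2 μ, ‖u‖ ≤ R → ‖v‖ ≤ R →
      eLpNorm (S₁ u - S₁ v) 2 μ ≤
        ENNReal.ofReal ((cW * L * κ * R + μinf) * ‖u - v‖)) :=
  stmt3_general d O hObd aplus ha μ hμ OU hOUO hOUm γ hγm γinf hγinf hγb W hWm M hWb μS hμSm μinf
    hμSb Uexp hUexp cW κ R R' L hcW hκ hR' hL hLip S₁ hS₁
end
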